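/- Let ϱ₋, ϱ₊, ϱ_{M−}, ϱ_{M+}, p₋, p₊, p_M, v₋, v₊, v_M, σ₋, σ₊ be real numbers with ϱ₋ ≠ ϱ_{M−} and ϱ₊ ≠ ϱ_{M+}, satisfying the Rankine–Hugoniot conditions σ₋(ϱ₋ − ϱ_{M−}) = ϱ₋v₋ − ϱ_{M−}v_M, σ₋(ϱ₋v₋ − ϱ_{M−}v_M) = ϱ₋v₋² − ϱ_{M−}v_M² + p₋ − p_M, σ₊(ϱ_{M+} − ϱ₊) = ϱ_{M+}v_M − ϱ₊v₊, and σ₊(ϱ_{M+}v_M − ϱ₊v₊) = ϱ_{M+}v_M² − ϱ₊v₊² + p_M − p₊. Then A(0)·v_M² − 2·D(0)·v_M + E = 0. -/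
import Mathlib


/-- **Lemma (quadratic equation for the intermediate velocity).** Eliminating the
shock speeds `σ₋`, `σ₊` and the intermediate pressure `p_M` from the four
Rankine–Hugoniot conditions of a two-shock 1D Riemann solution yields the
quadratic equation `A(0)·v_M² − 2·D(0)·v_M + E = 0`. -/
theorem intermediate_velocity_quadratic
    (ϱm ϱp ϱMm ϱMp pm pp pM vm vp vM σm σp : ℝ)
    (hm : ϱm ≠ ϱMm) (hp : ϱp ≠ ϱMp)
    (hrh1 : σm * (ϱm - ϱMm) = ϱm * vm - ϱMm * vM)
    (hrh2 : σm * (ϱm * vm - ϱMm * vM) = ϱm * vm ^ 2 - ϱMm * vM ^ 2 + pm - pM)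
    (hrh3 : σp * (ϱMp - ϱp) = ϱMp * vM - ϱp * vp)
    (hrh4 : σp * (ϱMp * vM - ϱp * vp) = ϱMp * vM ^ 2 - ϱp * vp ^ 2 + pM - pp) :
    (ϱm * ϱMm * (ϱMp - ϱp) - ϱp * ϱMp * (ϱMm - ϱm)) * vM ^ 2 -
      2 * (vm * ϱm * ϱMm * (ϱMp - ϱp) - vp * ϱp * ϱMp * (ϱMm - ϱm)) * vM +
      ((pm - pp) * (ϱMm - ϱm) * (ϱMp - ϱp) +
        vm ^ 2 * ϱm * ϱMm * (ϱMp - ϱp) - vp ^ 2 * ϱp * ϱMp * (ϱMm - ϱm)) = 0 := by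
  linear_combination -((ϱm * vm - ϱMm * vM) * hrh1 - (ϱm - ϱMm) * hrh2) * (ϱMp - ϱp) +
    ((ϱMp * vM - ϱp * vp) * hrh3 - (ϱMp - ϱp) * hrh4) * (ϱMm - ϱm)
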